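/- arXiv:2412.10221 — 3 statements merged into one kernel-verified Lean document; each statement's English description precedes it below -/
import Mathlib

section
/- Let E be a real locally convex space that is a Baire space. Then E is Weak Asplund if and only if every continuous convex function f : E → ℝ (defined on all of E) is Gâteaux differentiable at every point of some dense Gδ subset of E. -/
open Filter Topology Bornology TopologicalSpace

section Definitions

variable {E : Type*} [AddCommGroup E] [Module ℝ E] [TopologicalSpace E]

/-- A function `f` (thought of as a convex function on an open convex set containing `x₀`)
is Gâteaux differentiable at `x₀` if there is a continuous linear functional `L` such that
for every direction `x` and every `ε > 0` there is `δ > 0` with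
`|(f (x₀ + t • x) - f x₀) / t - L x| < ε` whenever `0 < |t| < δ`. -/
def GateauxDiffAt (f : E → ℝ) (x₀ : E) : Prop :=
  ∃ L : E →L[ℝ] ℝ, ∀ x : E, ∀ ε : ℝ, 0 < ε → ∃ δ : ℝ, 0 < δ ∧ ∀ t : ℝ,
    0 < |t| → |t| < δ → |(f (x₀ + t • x) - f x₀) / t - L x| < ε

/-- A function `f` is Fréchet differentiable at `x₀` if there is a continuous linear
functional `L` such that for every (von Neumann) bounded set `B` and every `ε > 0` there is
`δ > 0` with `|(f (x₀ + t • x) - f x₀) / t - L x| < ε` for all `x ∈ B`, whenever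
`0 < |t| < δ`. -/
def FrechetDiffAt (f : E → ℝ) (x₀ : E) : Prop :=
  ∃ L : E →L[ℝ] ℝ, ∀ B : Set E, IsVonNBounded ℝ B → ∀ ε : ℝ, 0 < ε →
    ∃ δ : ℝ, 0 < δ ∧ ∀ t : ℝ, 0 < |t| → |t| < δ →
      ∀ x ∈ B, |(f (x₀ + t • x) - f x₀) / t - L x| < ε

end Definitions

/-- `E` is Weak Asplund: every continuous convex function on a nonempty open convex set `D`
is Gâteaux differentiable at every point of a set which is a dense `Gδ` subset of `D`. -/
def IsWeakAsplund (E : Type*) [AddCommGroup E] [Module ℝ E] [TopologicalSpace E] : Prop :=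
  ∀ (D : Set E) (f : E → ℝ), D.Nonempty → IsOpen D → Convex ℝ D →
    ContinuousOn f D → ConvexOn ℝ D f →
    ∃ G : Set E, G ⊆ D ∧ IsGδ (Subtype.val ⁻¹' G : Set D) ∧
      Dense (Subtype.val ⁻¹' G : Set D) ∧ ∀ x ∈ G, GateauxDiffAt f x

/-!
Taking `D = E` gives one direction. Conversely, let `f` be continuous and convex on an open set
`D`. Near each point `x₀ ∈ D`, `f` is bounded above on a ball `p.ball x₀ r` of a continuous
seminorm `p`, hence `K`-Lipschitz for `p` on the half ball `C`, and the infimal convolution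
`y ↦ ⨅ u ∈ C, f u + K * p (y - u)` is a continuous convex function on all of `E` agreeing with
`f` on `C`. So the points of non-differentiability of `f` form a set that is meagre near every
point of `D`, hence meagre in `D` by Banach's category theorem; as `D` is a Baire space, the
differentiability points contain a dense `Gδ` subset of `D`.
-/

open Set

section BanachCategory

variable {X : Type*} [TopologicalSpace X]

lemma exists_seq_isOpen_dense_of_mem_residual {s : Set X} (hs : s ∈ residual X) :
    ∃ T : ℕ → Set X, (∀ n, IsOpen (T n)) ∧ (∀ n, Dense (T n)) ∧ ⋂ n, T n ⊆ s := by
  obtain ⟨S, hSo, hSd, hSc, hSs⟩ := mem_residual_iff.1 hs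
  obtain ⟨T, hT⟩ := (hSc.insert univ).exists_eq_range (insert_nonempty _ _)
  have hTS (n : ℕ) : IsOpen (T n) ∧ Dense (T n) := by
    rcases (hT ▸ mem_range_self n : T n ∈ insert univ S) with h | h
    · simp [h]
    · exact ⟨hSo _ h, hSd _ h⟩
  refine ⟨T, fun n => (hTS n).1, fun n => (hTS n).2, ?_⟩
  rwa [← sInter_range, ← hT, sInter_insert, univ_inter]

lemma Set.exists_maximal_pairwiseDisjoint {α : Type*} (𝒢 : Set (Set α)) :
    ∃ 𝒱, Maximal (fun 𝒱 : Set (Set α) => 𝒱 ⊆ 𝒢 ∧ 𝒱.PairwiseDisjoint id) 𝒱 :=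
  zorn_subset _ fun c hc hchain => ⟨⋃₀ c, ⟨sUnion_subset fun _ h𝒱 => (hc h𝒱).1,
    (pairwiseDisjoint_sUnion hchain.directedOn).2 fun _ h𝒱 => (hc h𝒱).2⟩,
    fun _ => subset_sUnion_of_mem⟩

lemma isMeagre_of_dense_sUnion {s : Set X} {𝒱 : Set (Set X)} (hopen : ∀ V ∈ 𝒱, IsOpen V)
    (hdisj : 𝒱.PairwiseDisjoint id) (hdense : Dense (⋃₀ 𝒱))
    (hs : ∀ V ∈ 𝒱, IsMeagre (s ∩ V)) : IsMeagre s := by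
  choose! T hTo hTd hTs using fun V hV => exists_seq_isOpen_dense_of_mem_residual (hs V hV)
  have hmem (n : ℕ) : (⋃ V ∈ 𝒱, V ∩ T V n) ∈ residual X := by
    refine residual_of_dense_open (isOpen_biUnion fun V hV => (hopen V hV).inter (hTo V hV n))
      (hdense.mono ?_).of_closure
    refine sUnion_subset fun V hV => ((hTd V hV n).open_subset_closure_inter (hopen V hV)).trans ?_
    exact closure_mono (subset_biUnion_of_mem (u := fun V => V ∩ T V n) hV)
  refine mem_of_superset (countable_iInter_mem.2 hmem) fun x hx hxs => ?_
  simp only [mem_iInter, mem_iUnion] at hx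
  obtain ⟨V, hV, hxV, -⟩ := hx 0
  have hxT (n : ℕ) : x ∈ T V n := by
    obtain ⟨W, hW, hxW, hxT⟩ := hx n
    rwa [hdisj.elim_set hV hW x hxV hxW]
  exact hTs V hV (mem_iInter.2 hxT) ⟨hxs, hxV⟩

/-- Banach's category theorem. -/
theorem isMeagre_of_forall_exists_isMeagre_inter {s : Set X}
    (h : ∀ x ∈ s, ∃ U ∈ 𝓝 x, IsMeagre (s ∩ U)) : IsMeagre s := by
  obtain ⟨𝒱, h𝒱⟩ := exists_maximal_pairwiseDisjoint {V : Set X | IsOpen V ∧ IsMeagre (s ∩ V)}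
  refine isMeagre_of_dense_sUnion (fun V hV => (h𝒱.prop.1 hV).1) h𝒱.prop.2 ?_
    fun V hV => (h𝒱.prop.1 hV).2
  refine dense_iff_inter_open.2 fun W hWo hWne => ?_
  by_contra hW𝒱
  obtain ⟨V, hVo, hVW, hVne, hV⟩ : ∃ V, IsOpen V ∧ V ⊆ W ∧ V.Nonempty ∧ IsMeagre (s ∩ V) := by
    by_cases hsW : (s ∩ W).Nonempty
    · obtain ⟨x, hxs, hxW⟩ := hsW
      obtain ⟨U, hU, hsU⟩ := h x hxs
      exact ⟨interior U ∩ W, isOpen_interior.inter hWo, inter_subset_right,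
        ⟨x, mem_interior_iff_mem_nhds.2 hU, hxW⟩,
        hsU.mono (inter_subset_inter_right _ (inter_subset_left.trans interior_subset))⟩
    · rw [not_nonempty_iff_eq_empty] at hsW
      exact ⟨W, hWo, subset_rfl, hWne, hsW ▸ IsMeagre.empty⟩
  have hV𝒱 : V ∈ 𝒱 := by
    refine h𝒱.2 ⟨insert_subset ⟨hVo, hV⟩ h𝒱.prop.1, h𝒱.prop.2.insert fun U hU _ => ?_⟩
      (subset_insert _ _) (mem_insert V 𝒱)
    exact disjoint_left.2 fun x hxV hxU => hW𝒱 ⟨x, hVW hxV, U, hU, hxU⟩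
  obtain ⟨x, hx⟩ := hVne
  exact hW𝒱 ⟨x, hVW hx, V, hV𝒱, hx⟩

end BanachCategory

lemma GateauxDiffAt.congr_of_eventuallyEq {E : Type*} [AddCommGroup E] [Module ℝ E]
    [TopologicalSpace E] [ContinuousAdd E] [ContinuousSMul ℝ E] {f g : E → ℝ} {x : E}
    (h : GateauxDiffAt g x) (hfg : f =ᶠ[𝓝 x] g) : GateauxDiffAt f x := by
  obtain ⟨L, hL⟩ := h
  refine ⟨L, fun v ε hε => ?_⟩
  obtain ⟨δ₁, hδ₁, hδ⟩ := hL v ε hε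
  have hline : Tendsto (fun t : ℝ => x + t • v) (𝓝 0) (𝓝 x) := by
    simpa using (show Continuous fun t : ℝ => x + t • v by fun_prop).tendsto 0
  obtain ⟨δ₂, hδ₂, hδ₂fg⟩ := Metric.eventually_nhds_iff.1 (hline.eventually hfg)
  refine ⟨min δ₁ δ₂, lt_min hδ₁ hδ₂, fun t ht htδ => ?_⟩
  rw [hδ₂fg (by simpa [Real.dist_eq] using htδ.trans_le (min_le_right _ _)), hfg.eq_of_nhds]
  exact hδ t ht (htδ.trans_le (min_le_left _ _))

section ConvexSeminorm

variable {E : Type*} [AddCommGroup E] [Module ℝ E] {D : Set E} {f : E → ℝ}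

lemma ConvexOn.two_mul_le_add (hf : ConvexOn ℝ D f) {x w : E} (h₁ : x + w ∈ D)
    (h₂ : x - w ∈ D) : 2 * f x ≤ f (x + w) + f (x - w) := by
  have h := hf.2 h₁ h₂ (by norm_num : (0 : ℝ) ≤ 1 / 2) (by norm_num : (0 : ℝ) ≤ 1 / 2) (by norm_num)
  have hmid : (1 / 2 : ℝ) • (x + w) + (1 / 2 : ℝ) • (x - w) = x := by module
  rw [hmid, smul_eq_mul, smul_eq_mul] at h
  linarith

lemma ConvexOn.one_add_mul_le (hf : ConvexOn ℝ D f) {u v : E} {s : ℝ} (hs : 0 ≤ s)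
    (hz : u + s • (u - v) ∈ D) (hv : v ∈ D) :
    (1 + s) * f u ≤ f (u + s • (u - v)) + s * f v := by
  have h1s : 0 < 1 + s := by linarith
  have h := hf.2 hz hv (inv_nonneg.2 h1s.le) (div_nonneg hs h1s.le) (by field_simp)
  have hu : (1 + s)⁻¹ • (u + s • (u - v)) + (s / (1 + s)) • v = u := by
    match_scalars
    · field_simp
    · field_simp; ring
  rw [hu, smul_eq_mul, smul_eq_mul] at h
  calc (1 + s) * f u ≤ (1 + s) * ((1 + s)⁻¹ * f (u + s • (u - v)) + s / (1 + s) * f v) := by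
        gcongr
    _ = f (u + s • (u - v)) + s * f v := by field_simp

lemma ConvexOn.le_add_mul_seminorm (p : Seminorm ℝ E) (hf : ConvexOn ℝ D f) {x₀ u v : E}
    {r M : ℝ} (hD : p.ball x₀ r ⊆ D) (hM : ∀ x ∈ p.ball x₀ r, f x ≤ M)
    (hu : u ∈ p.ball x₀ (r / 2)) (hv : v ∈ p.ball x₀ (r / 2)) :
    f u ≤ f v + 4 * (M - f x₀) / r * p (u - v) := by
  rw [Seminorm.mem_ball] at hu hv
  have hr : 0 < r := by linarith [apply_nonneg p (u - x₀)]
  have hpuv := apply_nonneg p (u - v)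
  have hM₀ : f x₀ ≤ M := hM x₀ (p.mem_ball_self hr)
  have hv' : v ∈ p.ball x₀ r := p.mem_ball.2 (by linarith)
  have hlow : 2 * f x₀ - M ≤ f v := by
    have hv'' : x₀ - (v - x₀) ∈ p.ball x₀ r := by
      rwa [Seminorm.mem_ball, sub_sub_cancel_left, map_neg_eq_map, ← Seminorm.mem_ball]
    have h := hf.two_mul_le_add (w := v - x₀) (by simpa using hD hv') (hD hv'')
    rw [add_sub_cancel] at h
    linarith [hM _ hv'']
  set c := 4 * (M - f x₀) / r
  -- the slack `δ` is needed because `p (u - v)` may vanish although `u ≠ v`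
  have key (δ : ℝ) (hδ : 0 < δ) : f u ≤ f v + c * (p (u - v) + δ) := by
    set s := r / (2 * (p (u - v) + δ))
    have hs : 0 < s := by positivity
    have hsp : s * p (u - v) ≤ r / 2 := by
      rw [div_mul_eq_mul_div, div_le_div_iff₀ (by positivity) two_pos]
      nlinarith
    have hz : u + s • (u - v) ∈ p.ball x₀ r := by
      rw [Seminorm.mem_ball]
      calc p (u + s • (u - v) - x₀) ≤ p (u - x₀) + p (s • (u - v)) := by
            rw [add_sub_right_comm]; exact map_add_le_add p _ _
        _ = p (u - x₀) + s * p (u - v) := by rw [map_smul_eq_mul, Real.norm_of_nonneg hs.le]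
        _ < r := by linarith
    have hconv := hf.one_add_mul_le hs.le (hD hz) (hD hv')
    have hbound : s * (f u - f v) ≤ 2 * (M - f x₀) := by nlinarith [hM _ hz]
    have hc : c * (p (u - v) + δ) = 2 * (M - f x₀) / s := by
      simp only [c, s]; field_simp; ring
    rw [hc, ← sub_le_iff_le_add', le_div_iff₀ hs]
    linarith
  have hlim : Tendsto (fun δ => f v + c * (p (u - v) + δ)) (𝓝[>] 0)
      (𝓝 (f v + c * p (u - v))) := by
    have hcont : Continuous fun δ => f v + c * (p (u - v) + δ) := by fun_prop
    simpa using (hcont.tendsto 0).mono_left nhdsWithin_le_nhds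
  exact ge_of_tendsto hlim (eventually_nhdsWithin_of_forall key)

end ConvexSeminorm

section InfConvolution

variable {E : Type*} [AddCommGroup E] [Module ℝ E] {p : Seminorm ℝ E} {K : ℝ} {C : Set E}
  {f : E → ℝ}

noncomputable def infConvSeminorm (p : Seminorm ℝ E) (K : ℝ) (C : Set E) (f : E → ℝ) (y : E) :
    ℝ :=
  ⨅ u : C, f u + K * p (y - u)

lemma bddBelow_range_add_mul_seminorm (hK : 0 ≤ K)
    (hlip : ∀ u ∈ C, ∀ v ∈ C, f u ≤ f v + K * p (u - v)) {v : E} (hv : v ∈ C) (y : E) :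
    BddBelow (range fun u : C => f u + K * p (y - u)) := by
  refine ⟨f v - K * p (v - y), forall_mem_range.2 fun u => ?_⟩
  have := mul_le_mul_of_nonneg_left (le_map_sub_add_map_sub p v y u) hK
  linarith [hlip v hv u u.2]

lemma infConvSeminorm_le (hK : 0 ≤ K) (hlip : ∀ u ∈ C, ∀ v ∈ C, f u ≤ f v + K * p (u - v))
    {u : E} (hu : u ∈ C) (y : E) : infConvSeminorm p K C f y ≤ f u + K * p (y - u) :=
  ciInf_le (bddBelow_range_add_mul_seminorm hK hlip hu y) ⟨u, hu⟩

variable (p K f) in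
lemma exists_lt_infConvSeminorm_add (hC : C.Nonempty) (y : E) {ε : ℝ} (hε : 0 < ε) :
    ∃ u ∈ C, f u + K * p (y - u) < infConvSeminorm p K C f y + ε := by
  have := hC.to_subtype
  obtain ⟨⟨u, hu⟩, h⟩ := exists_lt_of_ciInf_lt (lt_add_of_pos_right (infConvSeminorm p K C f y) hε)
  exact ⟨u, hu, h⟩

lemma eqOn_infConvSeminorm (hK : 0 ≤ K) (hlip : ∀ u ∈ C, ∀ v ∈ C, f u ≤ f v + K * p (u - v)) :
    EqOn (infConvSeminorm p K C f) f C := fun y hy => by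
  have := Nonempty.to_subtype ⟨y, hy⟩
  refine le_antisymm ?_ (le_ciInf fun u => hlip y hy u u.2)
  simpa using infConvSeminorm_le hK hlip hy y

lemma infConvSeminorm_le_add (hK : 0 ≤ K) (hlip : ∀ u ∈ C, ∀ v ∈ C, f u ≤ f v + K * p (u - v))
    (hC : C.Nonempty) (y z : E) :
    infConvSeminorm p K C f y ≤ infConvSeminorm p K C f z + K * p (y - z) := by
  refine le_of_forall_pos_le_add fun ε hε => ?_
  obtain ⟨u, hu, hlt⟩ := exists_lt_infConvSeminorm_add p K f hC z hε
  have := mul_le_mul_of_nonneg_left (le_map_sub_add_map_sub p y z u) hK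
  linarith [infConvSeminorm_le hK hlip hu y]

lemma continuous_infConvSeminorm [TopologicalSpace E] [IsTopologicalAddGroup E] (hK : 0 ≤ K)
    (hlip : ∀ u ∈ C, ∀ v ∈ C, f u ≤ f v + K * p (u - v)) (hC : C.Nonempty) (hp : Continuous p) :
    Continuous (infConvSeminorm p K C f) := by
  refine continuous_iff_continuousAt.2 fun y => tendsto_sub_nhds_zero_iff.1 ?_
  refine squeeze_zero_norm (a := fun z => K * p (z - y)) (fun z => ?_) ?_
  · rw [Real.norm_eq_abs, abs_sub_le_iff, sub_le_iff_le_add', sub_le_iff_le_add']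
    exact ⟨infConvSeminorm_le_add hK hlip hC z y,
      map_sub_rev p y z ▸ infConvSeminorm_le_add hK hlip hC y z⟩
  · have hcont : Continuous fun z => K * p (z - y) := by fun_prop
    simpa using hcont.tendsto y

lemma convexOn_infConvSeminorm (hK : 0 ≤ K)
    (hlip : ∀ u ∈ C, ∀ v ∈ C, f u ≤ f v + K * p (u - v)) (hf : ConvexOn ℝ C f) :
    ConvexOn ℝ univ (infConvSeminorm p K C f) := by
  refine ⟨convex_univ, fun y₁ _ y₂ _ a b ha hb hab => ?_⟩
  rcases C.eq_empty_or_nonempty with rfl | hC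
  · simp [infConvSeminorm]
  rw [smul_eq_mul, smul_eq_mul]
  refine le_of_forall_pos_le_add fun ε hε => ?_
  obtain ⟨u₁, hu₁, h₁⟩ := exists_lt_infConvSeminorm_add p K f hC y₁ hε
  obtain ⟨u₂, hu₂, h₂⟩ := exists_lt_infConvSeminorm_add p K f hC y₂ hε
  have hg := infConvSeminorm_le hK hlip (hf.1 hu₁ hu₂ ha hb hab) (a • y₁ + b • y₂)
  have hfu := hf.2 hu₁ hu₂ ha hb hab
  rw [smul_eq_mul, smul_eq_mul] at hfu
  have hpu : p (a • y₁ + b • y₂ - (a • u₁ + b • u₂)) ≤ a * p (y₁ - u₁) + b * p (y₂ - u₂) :=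
    calc _ = p (a • (y₁ - u₁) + b • (y₂ - u₂)) := by congr 1; module
      _ ≤ p (a • (y₁ - u₁)) + p (b • (y₂ - u₂)) := map_add_le_add p _ _
      _ = a * p (y₁ - u₁) + b * p (y₂ - u₂) := by
        rw [map_smul_eq_mul, map_smul_eq_mul, Real.norm_of_nonneg ha, Real.norm_of_nonneg hb]
  nlinarith [mul_le_mul_of_nonneg_left h₁.le ha, mul_le_mul_of_nonneg_left h₂.le hb,
    mul_le_mul_of_nonneg_left hpu hK]

end InfConvolution

section LocallyConvex

variable {E : Type*} [AddCommGroup E] [Module ℝ E] [TopologicalSpace E] [IsTopologicalAddGroup E]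
  [ContinuousSMul ℝ E] [LocallyConvexSpace ℝ E]

lemma exists_continuous_seminorm_ball_subset {U : Set E} {x : E} (hU : U ∈ 𝓝 x) :
    ∃ p : Seminorm ℝ E, Continuous p ∧ ∃ r > 0, p.ball x r ⊆ U := by
  obtain ⟨s, r, hr, hsub⟩ := ((PolynormableSpace.withSeminorms ℝ E).mem_nhds_iff x U).1 hU
  exact ⟨_, Seminorm.continuous_finsetSup fun i _ => i.2, r, hr, hsub⟩

theorem ConvexOn.exists_convexOn_univ_eqOn {D : Set E} {f : E → ℝ} (hD : IsOpen D)
    (hfc : ContinuousOn f D) (hf : ConvexOn ℝ D f) {x₀ : E} (hx₀ : x₀ ∈ D) :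
    ∃ U, IsOpen U ∧ x₀ ∈ U ∧ ∃ g : E → ℝ, Continuous g ∧ ConvexOn ℝ univ g ∧ EqOn g f U := by
  have hU : D ∩ f ⁻¹' Iio (f x₀ + 1) ∈ 𝓝 x₀ := inter_mem (hD.mem_nhds hx₀)
    (hfc.continuousAt (hD.mem_nhds hx₀) (Iio_mem_nhds (lt_add_one _)))
  obtain ⟨p, hp, r, hr, hpU⟩ := exists_continuous_seminorm_ball_subset hU
  have hlip : ∀ u ∈ p.ball x₀ (r / 2), ∀ v ∈ p.ball x₀ (r / 2),
      f u ≤ f v + 4 * (f x₀ + 1 - f x₀) / r * p (u - v) := fun u hu v hv =>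
    hf.le_add_mul_seminorm p (hpU.trans inter_subset_left) (fun x hx => (hpU hx).2.le) hu hv
  have hK : 0 ≤ 4 * (f x₀ + 1 - f x₀) / r := by rw [add_sub_cancel_left]; positivity
  have hx₀C : x₀ ∈ p.ball x₀ (r / 2) := p.mem_ball_self (half_pos hr)
  refine ⟨p.ball x₀ (r / 2), isOpen_lt (by fun_prop) continuous_const, hx₀C, _,
    continuous_infConvSeminorm hK hlip ⟨x₀, hx₀C⟩ hp, convexOn_infConvSeminorm hK hlip ?_,
    eqOn_infConvSeminorm hK hlip⟩
  exact hf.subset ((p.ball_mono (half_le_self hr.le)).trans (hpU.trans inter_subset_left))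
    (p.convex_ball _ _)

theorem eventually_residual_gateauxDiffAt
    (H : ∀ g : E → ℝ, Continuous g → ConvexOn ℝ univ g → ∀ᶠ x in residual E, GateauxDiffAt g x)
    {D : Set E} {f : E → ℝ} (hD : IsOpen D) (hfc : ContinuousOn f D) (hf : ConvexOn ℝ D f) :
    ∀ᶠ x : D in residual D, GateauxDiffAt f x := by
  suffices h : IsMeagre {x : D | ¬GateauxDiffAt f x} from
    mem_of_superset h fun _ hx => not_not.1 hx
  refine isMeagre_of_forall_exists_isMeagre_inter fun x _ => ?_
  obtain ⟨U, hUo, hxU, g, hgc, hg, hgf⟩ := hf.exists_convexOn_univ_eqOn hD hfc x.2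
  refine ⟨(↑) ⁻¹' U, (hUo.preimage continuous_subtype_val).mem_nhds hxU, ?_⟩
  refine mem_of_superset ((tendsto_residual_of_isOpenMap continuous_subtype_val
    hD.isOpenMap_subtype_val).eventually (H g hgc hg)) ?_
  rintro y hgy ⟨hfy, hyU⟩
  exact hfy (hgy.congr_of_eventuallyEq (eventuallyEq_of_mem (hUo.mem_nhds hyU) hgf).symm)

end LocallyConvex

theorem isWeakAsplund_iff_global_convex_gateaux_general (E : Type*) [AddCommGroup E] [Module ℝ E] [TopologicalSpace E]
    [IsTopologicalAddGroup E] [ContinuousSMul ℝ E] [LocallyConvexSpace ℝ E]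
    [BaireSpace E] :
    IsWeakAsplund E ↔ ∀ f : E → ℝ, Continuous f → ConvexOn ℝ Set.univ f →
      ∃ G : Set E, IsGδ G ∧ Dense G ∧ ∀ x ∈ G, GateauxDiffAt f x := by
  refine ⟨fun hE f hfc hf => ?_, fun H D f _ hD _ hfc hf => ?_⟩
  · obtain ⟨G, -, hGδ, hGd, hG⟩ :=
      hE univ f univ_nonempty isOpen_univ convex_univ hfc.continuousOn hf
    let e := (Homeomorph.Set.univ E).symm
    have hGδ' := hGδ.preimage e.continuous
    have hGd' := hGd.preimage e.isOpenMap
    exact ⟨G, hGδ', hGd', hG⟩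
  · have := hD.baireSpace
    obtain ⟨t, htδ, htd, ht⟩ := eventually_residual.1 <|
      eventually_residual_gateauxDiffAt (fun g hgc hg => eventually_residual.2 (H g hgc hg)) hD hfc hf
    refine ⟨(↑) '' t, Subtype.coe_image_subset D t, ?_, ?_, forall_mem_image.2 ht⟩ <;>
      rwa [Subtype.val_injective.preimage_image]

/-- A Baire real locally convex space `E` is Weak Asplund if and only if every continuous
convex function `f : E → ℝ` defined on all of `E` is Gâteaux differentiable at every point
of some dense `Gδ` subset of `E`. -/
theorem isWeakAsplund_iff_global_convex_gateaux (E : Type*) [AddCommGroup E] [Module ℝ E] [TopologicalSpace E]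
    [IsTopologicalAddGroup E] [ContinuousSMul ℝ E] [LocallyConvexSpace ℝ E] [T2Space E]
    [BaireSpace E] :
    IsWeakAsplund E ↔ ∀ f : E → ℝ, Continuous f → ConvexOn ℝ Set.univ f →
      ∃ G : Set E, IsGδ G ∧ Dense G ∧ ∀ x ∈ G, GateauxDiffAt f x :=
  isWeakAsplund_iff_global_convex_gateaux_general E
end

section
/- Let E be a separable Baire topological linear space (real topological vector space) and let Y be a separable Fréchet space (separable completely metrizable real locally convex space). Then the product E × Y is Weak Asplund. -/
/-!
`E × Y` is separable, and it is a Baire space: for a dense open `F ⊆ E × Y`, residually many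
vertical sections `{y | (x, y) ∈ F}` are dense, because each basic open set of the second-countable
`Y` is met by the sections over a dense open set of `x`. So it suffices to prove Mazur's theorem:
a separable Baire topological vector space is Weak Asplund.

Let `f` be continuous and convex on `D` and let `u` be a dense sequence. The points of `D` at which
some symmetric second difference quotient of `f` in direction `u k` is below `1 / (n + 1)` form an
open set, dense in `D` because the right derivative of a convex function of one variable is
monotone, hence continuous off a countable set. At a point `x` of the intersection of these sets,
the right directional derivative `p v` of `f` at `x` is sublinear and continuous, and
`p v + p (-v)`, being bounded by these quotients, vanishes for every `v = u k`, hence by continuity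
for every `v`; so `p` is a continuous linear functional, and it is the Gâteaux derivative of `f`
at `x`.
-/

open Filter Topology Bornology TopologicalSpace

/-- A topological space is completely metrizable if its topology is induced by some complete
metric. -/
def CompletelyMetrizable (X : Type*) [t : TopologicalSpace X] : Prop :=
  ∃ m : MetricSpace X, m.toUniformSpace.toTopologicalSpace = t ∧
    @CompleteSpace X m.toUniformSpace

open Set

section BaireProduct

variable {X Y : Type*} [TopologicalSpace X] [TopologicalSpace Y]

theorem Dense.eventually_residual_dense_prodMk_preimage [SecondCountableTopology Y]
    {F : Set (X × Y)} (hFo : IsOpen F) (hFd : Dense F) :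
    ∀ᶠ x in residual X, Dense (Prod.mk x ⁻¹' F) := by
  have hmeet : ∀ B ∈ countableBasis Y, ∀ᶠ x in residual X, (B ∩ Prod.mk x ⁻¹' F).Nonempty := by
    intro B hB
    have hproj : {x | (B ∩ Prod.mk x ⁻¹' F).Nonempty} = Prod.fst '' (F ∩ univ ×ˢ B) := by
      ext x
      simp only [mem_ofPred_eq, mem_image, mem_inter_iff, mem_prod, mem_univ, true_and,
        Prod.exists, exists_and_right, exists_eq_right]
      exact ⟨fun ⟨y, hyB, hyF⟩ => ⟨y, hyF, hyB⟩, fun ⟨y, hyF, hyB⟩ => ⟨y, hyB, hyF⟩⟩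
    refine residual_of_dense_open ?_ ?_
    · rw [hproj]
      exact isOpenMap_fst _ (hFo.inter (isOpen_univ.prod (isOpen_of_mem_countableBasis hB)))
    · refine dense_iff_inter_open.2 fun U hU ⟨a, ha⟩ => ?_
      obtain ⟨⟨x, y⟩, ⟨hxU, hyB⟩, hxyF⟩ := hFd.inter_open_nonempty (U ×ˢ B)
        (hU.prod (isOpen_of_mem_countableBasis hB)) (Set.Nonempty.prod ⟨a, ha⟩
          (nonempty_of_mem_countableBasis hB))
      exact ⟨x, hxU, y, hyB, hxyF⟩
  filter_upwards [(eventually_countable_ball (countable_countableBasis Y)).2 hmeet] with x hx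
  exact (isBasis_countableBasis Y).dense_iff.2 fun B hB _ => hx B hB

instance BaireSpace.prod [BaireSpace X] [SecondCountableTopology Y] [BaireSpace Y] :
    BaireSpace (X × Y) := by
  refine ⟨fun F hFo hFd => ?_⟩
  have hsections : ∀ᶠ x in residual X, ∀ n, Dense (Prod.mk x ⁻¹' F n) :=
    eventually_countable_forall.2 fun n =>
      (hFd n).eventually_residual_dense_prodMk_preimage (hFo n)
  refine (isTopologicalBasis_opens.prod isTopologicalBasis_opens).dense_iff.2 ?_
  rintro _ ⟨U, hU, V, hV, rfl⟩ ⟨⟨a, b⟩, ha, hb⟩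
  obtain ⟨x, hxU, hx⟩ := (dense_of_mem_residual hsections).inter_open_nonempty U hU ⟨a, ha⟩
  obtain ⟨y, hyV, hy⟩ := (dense_iInter_of_isOpen (fun n => (hFo n).preimage
    (Continuous.prodMk_right x)) hx).inter_open_nonempty V hV ⟨b, hb⟩
  exact ⟨(x, y), ⟨hxU, hyV⟩, mem_iInter.2 fun n => mem_iInter.1 hy n⟩

end BaireProduct

theorem ConvexOn.exists_add_sub_sub_two_mul_lt {S J : Set ℝ} {φ : ℝ → ℝ}
    (hφ : ConvexOn ℝ S φ) (hS : IsOpen S) (hJ : IsOpen J) (hJS : J ⊆ S) (hJne : J.Nonempty)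
    {ε : ℝ} (hε : 0 < ε) :
    ∃ s ∈ J, ∃ t > 0, s + t ∈ S ∧ s - t ∈ S ∧ φ (s + t) + φ (s - t) - 2 * φ s < ε * t := by
  set r : ℝ → ℝ := fun x => derivWithin φ (Ioi x) x
  have hr : MonotoneOn r S := by simpa [hS.interior_eq] using hφ.monotoneOn_rightDeriv
  obtain ⟨s, hsJ, hsc⟩ := (hr.countable_not_continuousWithinAt.dense_compl ℝ).inter_open_nonempty
    J hJ hJne
  have hsS : s ∈ S := hJS hsJ
  have hrs : ContinuousAt r s :=
    (not_not.1 fun h => hsc ⟨hsS, h⟩).continuousAt (hS.mem_nhds hsS)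
  obtain ⟨δ, hδ, hball⟩ : ∃ δ > 0, ∀ u, dist u s < δ → u ∈ S ∧ dist (r u) (r s) < ε / 2 :=
    Metric.eventually_nhds_iff.1 ((hS.eventually_mem hsS).and
      (hrs.eventually (Metric.ball_mem_nhds _ (half_pos hε))))
  obtain ⟨t, ht, htδ⟩ : ∃ t, 0 < t ∧ t < δ := ⟨δ / 2, half_pos hδ, half_lt_self hδ⟩
  obtain ⟨hp, hrp⟩ := hball (s + t) (by rwa [Real.dist_eq, add_sub_cancel_left, abs_of_pos ht])
  obtain ⟨hm, hrm⟩ := hball (s - t) (by rwa [Real.dist_eq, sub_sub_cancel_left, abs_neg,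
    abs_of_pos ht])
  have hSi : interior S = S := hS.interior_eq
  -- at a continuity point of the right derivative, both secant slopes are close to `r s`
  have hright : slope φ s (s + t) ≤ r (s + t) :=
    (hφ.slope_le_leftDeriv_of_mem_interior hsS (by rwa [hSi]) (by linarith)).trans
      (hφ.leftDeriv_le_rightDeriv_of_mem_interior (by rwa [hSi]))
  have hleft : r (s - t) ≤ slope φ (s - t) s :=
    hφ.rightDeriv_le_slope_of_mem_interior (by rwa [hSi]) hsS (by linarith)
  rw [slope_def_field, add_sub_cancel_left, div_le_iff₀ ht] at hright
  rw [slope_def_field, sub_sub_cancel, le_div_iff₀ ht] at hleft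
  rw [Real.dist_eq, abs_lt] at hrp hrm
  have hgap : (r (s + t) - r (s - t)) * t < ε * t := mul_lt_mul_of_pos_right (by linarith) ht
  exact ⟨s, hsJ, t, ht, hp, hm, by linarith⟩

theorem tendsto_const_mul_nhdsGT_zero {c : ℝ} (hc : 0 < c) :
    Tendsto (fun t : ℝ => c * t) (𝓝[>] 0) (𝓝[>] 0) :=
  tendsto_nhdsWithin_iff.2
    ⟨((continuous_const_mul c).tendsto' 0 0 (mul_zero c)).mono_left nhdsWithin_le_nhds,
      eventually_nhdsWithin_of_forall fun _ ht => mul_pos hc ht⟩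

theorem continuous_of_add_le_of_eventually_lt {G : Type*} [AddGroup G] [TopologicalSpace G]
    [IsTopologicalAddGroup G] {p : G → ℝ} (hadd : ∀ a b, p (a + b) ≤ p a + p b)
    (hsmall : ∀ ε > 0, ∀ᶠ w in 𝓝 0, p w < ε) : Continuous p := by
  refine continuous_iff_continuousAt.2 fun v₀ => Metric.tendsto_nhds.2 fun ε hε => ?_
  have h₁ : ∀ᶠ v in 𝓝 v₀, p (-v₀ + v) < ε :=
    ((continuous_const_add (-v₀)).tendsto' v₀ 0 (neg_add_cancel v₀)).eventually (hsmall ε hε)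
  have h₂ : ∀ᶠ v in 𝓝 v₀, p (-v + v₀) < ε :=
    ((continuous_neg.add continuous_const).tendsto' v₀ 0 (neg_add_cancel v₀)).eventually
      (hsmall ε hε)
  filter_upwards [h₁, h₂] with v hv₁ hv₂
  have hle₁ := hadd v₀ (-v₀ + v)
  have hle₂ := hadd v (-v + v₀)
  rw [add_neg_cancel_left] at hle₁ hle₂
  rw [Real.dist_eq, abs_sub_lt_iff]
  constructor <;> linarith

theorem exists_continuousLinearMap_eq_of_sublinear {X : Type*} [AddCommGroup X] [Module ℝ X]
    [TopologicalSpace X] {p : X → ℝ} (hcont : Continuous p)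
    (hadd : ∀ a b, p (a + b) ≤ p a + p b) (hsmul : ∀ c : ℝ, 0 < c → ∀ v, p (c • v) = c * p v)
    (hneg : ∀ v, p (-v) = -p v) : ∃ L : X →L[ℝ] ℝ, ⇑L = p := by
  have hmap_add : ∀ a b, p (a + b) = p a + p b := fun a b => by
    have h := hadd (-a) (-b)
    rw [← neg_add, hneg, hneg, hneg] at h
    exact le_antisymm (hadd a b) (by linarith)
  have hmap_smul : ∀ (c : ℝ) (v : X), p (c • v) = c * p v := fun c v => by
    rcases lt_trichotomy c 0 with hc | rfl | hc
    · rw [← neg_neg c, neg_smul, hneg, hsmul (-c) (neg_pos.2 hc)]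
      ring
    · have h := hneg 0
      rw [neg_zero] at h
      rw [zero_smul, zero_mul]
      linarith
    · exact hsmul c hc v
  exact ⟨⟨⟨⟨p, hmap_add⟩, hmap_smul⟩, hcont⟩, rfl⟩

theorem gateauxDiffAt_of_tendsto_nhdsGT {X : Type*} [AddCommGroup X] [Module ℝ X]
    [TopologicalSpace X] {f : X → ℝ} {x : X} (L : X →L[ℝ] ℝ)
    (hL : ∀ v, Tendsto (fun t : ℝ => (f (x + t • v) - f x) / t) (𝓝[>] 0) (𝓝 (L v))) :
    GateauxDiffAt f x := by
  refine ⟨L, fun v ε hε => ?_⟩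
  obtain ⟨δ₁, hδ₁, h₁⟩ := Metric.tendsto_nhdsWithin_nhds.1 (hL v) ε hε
  obtain ⟨δ₂, hδ₂, h₂⟩ := Metric.tendsto_nhdsWithin_nhds.1 (hL (-v)) ε hε
  refine ⟨min δ₁ δ₂, lt_min hδ₁ hδ₂, fun t ht₀ htδ => ?_⟩
  rcases lt_or_gt_of_ne (abs_pos.1 ht₀) with ht | ht
  · -- for `t < 0` the difference quotient in direction `v` is minus the one at `-t` along `-v`
    have h := h₂ (neg_pos.2 ht) (by
      rw [Real.dist_eq, sub_zero, abs_neg]; exact htδ.trans_le (min_le_right _ _))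
    rw [Real.dist_eq, neg_smul_neg, map_neg, div_neg, sub_neg_eq_add, neg_add_eq_sub,
      abs_sub_comm] at h
    exact h
  · rw [← Real.dist_eq]
    exact h₁ ht (by rw [Real.dist_eq, sub_zero]; exact htδ.trans_le (min_le_left _ _))

section DirectionalDerivative

variable {X : Type*} [AddCommGroup X] [Module ℝ X] {D : Set X} {f : X → ℝ}

theorem ConvexOn.comp_add_smul (hf : ConvexOn ℝ D f) (x v : X) :
    ConvexOn ℝ {t : ℝ | x + t • v ∈ D} (fun t => f (x + t • v)) := by
  have hline : ∀ t : ℝ, AffineMap.lineMap x (x + v) t = x + t • v := fun t => by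
    rw [AffineMap.lineMap_apply, vsub_eq_sub, add_sub_cancel_left, vadd_eq_add, add_comm]
  simpa only [Set.preimage, Function.comp_def, hline] using
    hf.comp_affineMap (AffineMap.lineMap x (x + v))

noncomputable def rightDirDeriv (f : X → ℝ) (x v : X) : ℝ :=
  derivWithin (fun t : ℝ => f (x + t • v)) (Ioi 0) 0

theorem rightDirDeriv_zero (f : X → ℝ) (x : X) : rightDirDeriv f x 0 = 0 := by
  simp [rightDirDeriv]

def secondDiffLtSet (f : X → ℝ) (D : Set X) (v : X) (ε : ℝ) : Set X :=
  {z | ∃ t > 0, (z ∈ D ∧ z + t • v ∈ D ∧ z - t • v ∈ D) ∧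
    f (z + t • v) + f (z - t • v) - 2 * f z < ε * t}

variable [TopologicalSpace X] [IsTopologicalAddGroup X]

theorem isOpen_secondDiffLtSet (hD : IsOpen D) (hfc : ContinuousOn f D) (v : X) (ε : ℝ) :
    IsOpen (secondDiffLtSet f D v ε) := by
  simp only [secondDiffLtSet, ofPred_exists, ofPred_and]
  refine isOpen_iUnion fun t => isOpen_const.inter ?_
  have hp : Continuous fun z : X => z + t • v := by fun_prop
  have hm : Continuous fun z : X => z - t • v := by fun_prop
  exact (((hfc.comp hp.continuousOn fun _ hz => hz.2.1).add
    (hfc.comp hm.continuousOn fun _ hz => hz.2.2)).sub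
    (continuousOn_const.mul (hfc.mono fun _ hz => hz.1))).isOpen_inter_preimage
    (hD.inter ((hD.preimage hp).inter (hD.preimage hm))) isOpen_Iio

variable [ContinuousSMul ℝ X]

theorem isOpen_setOf_add_smul_mem (hD : IsOpen D) (x v : X) : IsOpen {t : ℝ | x + t • v ∈ D} :=
  hD.preimage (by fun_prop)

theorem zero_mem_interior_setOf_add_smul_mem (hD : IsOpen D) {x : X} (hx : x ∈ D) (v : X) :
    (0 : ℝ) ∈ interior {t : ℝ | x + t • v ∈ D} :=
  mem_interior_iff_mem_nhds.2 ((isOpen_setOf_add_smul_mem hD x v).mem_nhds (by simpa using hx))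

theorem ConvexOn.tendsto_rightDirDeriv (hD : IsOpen D) (hf : ConvexOn ℝ D f) {x : X}
    (hx : x ∈ D) (v : X) :
    Tendsto (fun t : ℝ => (f (x + t • v) - f x) / t) (𝓝[>] 0) (𝓝 (rightDirDeriv f x v)) := by
  have h := (hf.comp_add_smul x v).hasDerivWithinAt_rightDeriv_of_mem_interior
    (zero_mem_interior_setOf_add_smul_mem hD hx v)
  rw [hasDerivWithinAt_iff_tendsto_slope' (s := Ioi 0) (lt_irrefl 0)] at h
  exact h.congr fun t => by simp [slope_def_field]

theorem ConvexOn.rightDirDeriv_le (hD : IsOpen D) (hf : ConvexOn ℝ D f) {x v : X} (hx : x ∈ D)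
    {t : ℝ} (ht : 0 < t) (hxt : x + t • v ∈ D) :
    rightDirDeriv f x v ≤ (f (x + t • v) - f x) / t := by
  have h := (hf.comp_add_smul x v).rightDeriv_le_slope_of_mem_interior
    (zero_mem_interior_setOf_add_smul_mem hD hx v) hxt ht
  simpa [slope_def_field, rightDirDeriv] using h

theorem ConvexOn.rightDirDeriv_smul (hD : IsOpen D) (hf : ConvexOn ℝ D f) {x : X} (hx : x ∈ D)
    (v : X) {c : ℝ} (hc : 0 < c) : rightDirDeriv f x (c • v) = c * rightDirDeriv f x v := by
  refine tendsto_nhds_unique (hf.tendsto_rightDirDeriv hD hx (c • v)) ?_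
  refine (((hf.tendsto_rightDirDeriv hD hx v).comp (tendsto_const_mul_nhdsGT_zero hc)).const_mul
    c).congr fun t => ?_
  rw [Function.comp_apply, ← mul_div_assoc, mul_div_mul_left _ _ hc.ne', smul_smul, mul_comm c t]

theorem ConvexOn.rightDirDeriv_add_le (hD : IsOpen D) (hf : ConvexOn ℝ D f) {x : X} (hx : x ∈ D)
    (a b : X) : rightDirDeriv f x (a + b) ≤ rightDirDeriv f x a + rightDirDeriv f x b := by
  have h2 := tendsto_const_mul_nhdsGT_zero two_pos
  refine le_of_tendsto_of_tendsto (hf.tendsto_rightDirDeriv hD hx (a + b))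
    (((hf.tendsto_rightDirDeriv hD hx a).add (hf.tendsto_rightDirDeriv hD hx b)).comp h2) ?_
  have hmem : ∀ w : X, ∀ᶠ t in 𝓝[>] (0 : ℝ), x + (2 * t) • w ∈ D := fun w =>
    h2.eventually (eventually_nhdsWithin_of_eventually_nhds
      ((isOpen_setOf_add_smul_mem hD x w).mem_nhds (by simpa using hx)))
  filter_upwards [hmem a, hmem b, self_mem_nhdsWithin] with t ha hb (ht : 0 < t)
  have hmid := hf.2 ha hb (by norm_num : (0 : ℝ) ≤ 1 / 2) (by norm_num : (0 : ℝ) ≤ 1 / 2)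
    (by norm_num)
  rw [show (1 / 2 : ℝ) • (x + (2 * t) • a) + (1 / 2 : ℝ) • (x + (2 * t) • b) = x + t • (a + b)
    by module, smul_eq_mul, smul_eq_mul] at hmid
  rw [Function.comp_apply, ← add_div, div_le_div_iff₀ ht (by positivity)]
  nlinarith

theorem ConvexOn.eventually_rightDirDeriv_lt (hD : IsOpen D) (hf : ConvexOn ℝ D f)
    (hfc : ContinuousOn f D) {x : X} (hx : x ∈ D) {ε : ℝ} (hε : 0 < ε) :
    ∀ᶠ w in 𝓝 0, rightDirDeriv f x w < ε := by
  have hnear : ∀ᶠ w in 𝓝 (0 : X), x + w ∈ D ∧ f (x + w) < f x + ε := by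
    refine ((continuous_const_add x).tendsto' 0 x (add_zero x)).eventually
      (p := fun z => z ∈ D ∧ f z < f x + ε) ?_
    exact (hD.eventually_mem hx).and
      ((hfc.continuousAt (hD.mem_nhds hx)).eventually (gt_mem_nhds (lt_add_of_pos_right _ hε)))
  filter_upwards [hnear] with w ⟨hwD, hwlt⟩
  have h := hf.rightDirDeriv_le hD hx one_pos (v := w) (by rwa [one_smul])
  rw [one_smul, div_one] at h
  linarith

theorem ConvexOn.continuous_rightDirDeriv (hD : IsOpen D) (hf : ConvexOn ℝ D f)
    (hfc : ContinuousOn f D) {x : X} (hx : x ∈ D) : Continuous (rightDirDeriv f x) :=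
  continuous_of_add_le_of_eventually_lt (hf.rightDirDeriv_add_le hD hx)
    fun _ hε => hf.eventually_rightDirDeriv_lt hD hfc hx hε

theorem ConvexOn.subset_closure_secondDiffLtSet (hD : IsOpen D) (hf : ConvexOn ℝ D f) (v : X)
    {ε : ℝ} (hε : 0 < ε) : D ⊆ closure (secondDiffLtSet f D v ε) := by
  refine fun x hx => mem_closure_iff.2 fun O hO hxO => ?_
  have hline : Continuous fun t : ℝ => x + t • v := by fun_prop
  obtain ⟨s, ⟨hsO, hsD⟩, t, ht, hp, hm, hlt⟩ :=
    (hf.comp_add_smul x v).exists_add_sub_sub_two_mul_lt (isOpen_setOf_add_smul_mem hD x v)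
      ((hO.inter hD).preimage hline) (fun _ hs => hs.2) ⟨0, by simpa using ⟨hxO, hx⟩⟩ hε
  have e_add : x + s • v + t • v = x + (s + t) • v := by module
  have e_sub : x + s • v - t • v = x + (s - t) • v := by module
  exact ⟨x + s • v, hsO, t, ht, ⟨hsD, e_add ▸ hp, e_sub ▸ hm⟩, by rwa [e_add, e_sub]⟩

theorem ConvexOn.rightDirDeriv_add_rightDirDeriv_neg_nonpos (hD : IsOpen D)
    (hf : ConvexOn ℝ D f) {x v : X} (hx : ∀ n : ℕ, x ∈ secondDiffLtSet f D v (1 / (n + 1))) :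
    rightDirDeriv f x v + rightDirDeriv f x (-v) ≤ 0 := by
  refine le_of_forall_pos_le_add fun ε hε => ?_
  obtain ⟨n, hn⟩ := exists_nat_one_div_lt hε
  obtain ⟨t, ht, ⟨hxD, hp, hm⟩, hlt⟩ := hx n
  have h₁ := hf.rightDirDeriv_le hD hxD ht hp
  have h₂ := hf.rightDirDeriv_le hD hxD ht (v := -v) (by rwa [smul_neg, ← sub_eq_add_neg])
  rw [smul_neg, ← sub_eq_add_neg] at h₂
  have hsum : (f (x + t • v) - f x) / t + (f (x - t • v) - f x) / t < ε := by
    rw [← add_div, div_lt_iff₀ ht]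
    linarith [mul_lt_mul_of_pos_right hn ht]
  linarith

theorem ConvexOn.gateauxDiffAt_of_forall_mem_secondDiffLtSet (hD : IsOpen D)
    (hf : ConvexOn ℝ D f) (hfc : ContinuousOn f D) {u : ℕ → X} (hu : DenseRange u) {x : X}
    (hx : ∀ k n : ℕ, x ∈ secondDiffLtSet f D (u k) (1 / (n + 1))) : GateauxDiffAt f x := by
  obtain ⟨-, -, ⟨hxD, -⟩, -⟩ := hx 0 0
  have hcont := hf.continuous_rightDirDeriv hD hfc hxD
  have hadd := hf.rightDirDeriv_add_le hD hxD
  -- subadditivity gives `≥ 0` everywhere, `hx` gives `≤ 0` on the dense range of `u`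
  have hodd : ∀ v, rightDirDeriv f x v + rightDirDeriv f x (-v) = 0 := fun v =>
    hu.induction_on v (isClosed_eq (hcont.add (hcont.comp continuous_neg)) continuous_const)
      fun k => le_antisymm (hf.rightDirDeriv_add_rightDirDeriv_neg_nonpos hD (hx k))
        (by simpa [rightDirDeriv_zero] using hadd (u k) (-u k))
  obtain ⟨L, hL⟩ := exists_continuousLinearMap_eq_of_sublinear hcont hadd
    (fun _ hc v => hf.rightDirDeriv_smul hD hxD v hc) fun v => eq_neg_of_add_eq_zero_right (hodd v)
  exact gateauxDiffAt_of_tendsto_nhdsGT L fun v => hL ▸ hf.tendsto_rightDirDeriv hD hxD v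

end DirectionalDerivative

theorem isWeakAsplund_of_separableSpace_of_baireSpace (X : Type*) [AddCommGroup X]
    [Module ℝ X] [TopologicalSpace X] [IsTopologicalAddGroup X] [ContinuousSMul ℝ X]
    [SeparableSpace X] [BaireSpace X] : IsWeakAsplund X := by
  intro D f _ hD _ hfc hf
  obtain ⟨u, hu⟩ := exists_dense_seq X
  set G : ℕ × ℕ → Set X := fun q => secondDiffLtSet f D (u q.1) (1 / (q.2 + 1))
  have hGo : ∀ q, IsOpen (G q) := fun q => isOpen_secondDiffLtSet hD hfc _ _
  have hGD : ∀ q, G q ⊆ D := fun q z ⟨_, _, ⟨hz, _⟩, _⟩ => hz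
  have hGd : ∀ q, Dense (Subtype.val ⁻¹' G q : Set D) := fun q => by
    rw [Subtype.dense_iff, Subtype.image_preimage_coe, inter_eq_right.2 (hGD q)]
    exact hf.subset_closure_secondDiffLtSet hD _ Nat.one_div_pos_of_nat
  have := hD.baireSpace
  refine ⟨⋂ q, G q, (iInter_subset _ (0, 0)).trans (hGD _), ?_, ?_,
    fun x hx => hf.gateauxDiffAt_of_forall_mem_secondDiffLtSet hD hfc hu fun k n =>
      mem_iInter.1 hx (k, n)⟩
  · rw [preimage_iInter]
    exact IsGδ.iInter fun q => ((hGo q).preimage continuous_subtype_val).isGδ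
  · rw [preimage_iInter]
    exact dense_iInter_of_isOpen (fun q => (hGo q).preimage continuous_subtype_val) hGd

theorem weakAsplund_prod_separable_frechet_general (E : Type*) [AddCommGroup E] [Module ℝ E]
    [TopologicalSpace E] [IsTopologicalAddGroup E] [ContinuousSMul ℝ E]
    [SeparableSpace E] [BaireSpace E]
    (Y : Type*) [AddCommGroup Y] [Module ℝ Y] [TopologicalSpace Y] [IsTopologicalAddGroup Y]
    [ContinuousSMul ℝ Y] [SeparableSpace Y]
    (hY : CompletelyMetrizable Y) :
    IsWeakAsplund (E × Y) := by
  -- with `SeparableSpace Y`, this makes `Y` Baire and second countable, so `E × Y` is Baire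
  have : IsCompletelyMetrizableSpace Y := ⟨hY⟩
  exact isWeakAsplund_of_separableSpace_of_baireSpace (E × Y)

/-- If `E` is a separable Baire topological linear space and `Y` is a separable Fréchet space
(a separable completely metrizable real locally convex space), then `E × Y` is Weak Asplund. -/
theorem weakAsplund_prod_separable_frechet (E : Type*) [AddCommGroup E] [Module ℝ E]
    [TopologicalSpace E] [IsTopologicalAddGroup E] [ContinuousSMul ℝ E] [T2Space E]
    [SeparableSpace E] [BaireSpace E]
    (Y : Type*) [AddCommGroup Y] [Module ℝ Y] [TopologicalSpace Y] [IsTopologicalAddGroup Y]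
    [ContinuousSMul ℝ Y] [LocallyConvexSpace ℝ Y] [T2Space Y] [SeparableSpace Y]
    (hY : CompletelyMetrizable Y) :
    IsWeakAsplund (E × Y) :=
  weakAsplund_prod_separable_frechet_general E Y hY
end

section
/- Let X be a Fréchet space (completely metrizable real locally convex space), Y a regular (T₃) real topological vector space, and T : X → Y a continuous linear open surjection which is also bound covering, i.e. for every bounded set B ⊆ Y there is a bounded set C ⊆ X with B ⊆ T(C). If X is Asplund, then Y is Asplund. -/
open Filter Topology Bornology TopologicalSpace

/-- `E` is Asplund: every continuous convex function on a nonempty open convex set `D`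
is Fréchet differentiable at every point of a set which is a dense `Gδ` subset of `D`. -/
def IsAsplund (E : Type*) [AddCommGroup E] [Module ℝ E] [TopologicalSpace E] : Prop :=
  ∀ (D : Set E) (f : E → ℝ), D.Nonempty → IsOpen D → Convex ℝ D →
    ContinuousOn f D → ConvexOn ℝ D f →
    ∃ G : Set E, G ⊆ D ∧ IsGδ (Subtype.val ⁻¹' G : Set D) ∧
      Dense (Subtype.val ⁻¹' G : Set D) ∧ ∀ x ∈ G, FrechetDiffAt f x

/-!
Pull a continuous convex `f` on `D ⊆ Y` back to `f ∘ T` on `T ⁻¹' D`; since `X` is Asplund,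
`f ∘ T` is Fréchet differentiable on a dense Gδ subset `G` of `T ⁻¹' D`. At a point `x ∈ G`
the derivative `L` of `f ∘ T` vanishes on `ker T`, so `L = M ∘ T` with `M` continuous because
`T` is open; as every bounded set of `Y` lifts to a bounded set of `X`, `M` is a Fréchet
derivative of `f` at `T x`.

It remains to find a dense Gδ subset of `D` inside `T '' G`. Write `G = ⋂ₖ Uₖ` and choose,
level by level, maximal disjoint families of open windows `W ⊆ Y`, each contained in `T '' B`
for an open set `B ⊆ X` of diameter at most `1/(k+1)` with `closure B ⊆ Uₖ`, every window
refining one of the previous level. A point lying in a window at every level sits in a nested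
sequence of such sets `B`, and completeness of `X` produces a preimage in `G`. The windows of
each level are dense in `D`, so by the Baire property of `X` so is the intersection of their
unions.
-/

open Set Metric

theorem ContinuousLinearMap.exists_comp_eq_of_isOpenMap {𝕜 E F G : Type*} [Field 𝕜]
    [AddCommGroup E] [Module 𝕜 E] [TopologicalSpace E]
    [AddCommGroup F] [Module 𝕜 F] [TopologicalSpace F]
    [AddCommGroup G] [Module 𝕜 G] [TopologicalSpace G]
    (T : E →L[𝕜] F) (hTo : IsOpenMap T) (hTs : Function.Surjective T) (L : E →L[𝕜] G)
    (hL : ∀ v, T v = 0 → L v = 0) : ∃ M : F →L[𝕜] G, M.comp T = L := by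
  obtain ⟨S, hS⟩ := (T : E →ₗ[𝕜] F).exists_rightInverse_of_surjective
    (LinearMap.range_eq_top.2 hTs)
  have hST : ∀ x, L (S (T x)) = L x := fun x => by
    have hTST : T (S (T x)) = T x := LinearMap.congr_fun hS (T x)
    simpa [sub_eq_zero] using hL (S (T x) - x) (by simp [hTST])
  have hM : Continuous (L.toLinearMap ∘ₗ S) :=
    (hTo.isQuotientMap T.continuous hTs).continuous_iff.2 <| by
      convert L.continuous using 1
      exact funext hST
  exact ⟨⟨L.toLinearMap ∘ₗ S, hM⟩, ContinuousLinearMap.ext hST⟩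

section FrechetDerivative

variable {E F : Type*} [AddCommGroup E] [Module ℝ E] [TopologicalSpace E]
  [AddCommGroup F] [Module ℝ F] [TopologicalSpace F]

-- `FrechetDiffAt f x₀` unfolds to `∃ L, HasFrechetDerivAt f L x₀`.
def HasFrechetDerivAt (f : E → ℝ) (L : E →L[ℝ] ℝ) (x₀ : E) : Prop :=
  ∀ B : Set E, IsVonNBounded ℝ B → ∀ ε : ℝ, 0 < ε →
    ∃ δ : ℝ, 0 < δ ∧ ∀ t : ℝ, 0 < |t| → |t| < δ →
      ∀ x ∈ B, |(f (x₀ + t • x) - f x₀) / t - L x| < ε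

theorem HasFrechetDerivAt.apply_eq_zero [ContinuousSMul ℝ E] {f : E → ℝ} {L : E →L[ℝ] ℝ}
    {x₀ v : E} (hf : HasFrechetDerivAt f L x₀) (hv : ∀ t : ℝ, f (x₀ + t • v) = f x₀) :
    L v = 0 := by
  by_contra hLv
  obtain ⟨δ, hδ, hδL⟩ := hf {v} (isVonNBounded_singleton v) |L v| (abs_pos.2 hLv)
  have hδ2 : |δ / 2| < δ := by rw [abs_of_pos (half_pos hδ)]; exact half_lt_self hδ
  simpa [hv] using hδL (δ / 2) (abs_pos.2 (half_pos hδ).ne') hδ2 v rfl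

theorem HasFrechetDerivAt.of_comp (T : E →L[ℝ] F)
    (hT : ∀ B : Set F, IsVonNBounded ℝ B → ∃ C : Set E, IsVonNBounded ℝ C ∧ B ⊆ T '' C)
    {f : F → ℝ} {M : F →L[ℝ] ℝ} {x : E} (h : HasFrechetDerivAt (f ∘ T) (M.comp T) x) :
    HasFrechetDerivAt f M (T x) := by
  intro B hB ε hε
  obtain ⟨C, hC, hBC⟩ := hT B hB
  obtain ⟨δ, hδ, hδC⟩ := h C hC ε hε
  refine ⟨δ, hδ, fun t ht htδ _ hy => ?_⟩
  obtain ⟨c, hc, rfl⟩ := hBC hy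
  simpa using hδC t ht htδ c hc

theorem FrechetDiffAt.of_comp [ContinuousSMul ℝ E] (T : E →L[ℝ] F) (hTo : IsOpenMap T)
    (hTs : Function.Surjective T)
    (hT : ∀ B : Set F, IsVonNBounded ℝ B → ∃ C : Set E, IsVonNBounded ℝ C ∧ B ⊆ T '' C)
    {f : F → ℝ} {x : E} (h : FrechetDiffAt (f ∘ T) x) : FrechetDiffAt f (T x) := by
  obtain ⟨L, hL⟩ := h
  obtain ⟨M, rfl⟩ := T.exists_comp_eq_of_isOpenMap hTo hTs L fun v hv =>
    HasFrechetDerivAt.apply_eq_zero hL fun t => by simp [hv]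
  exact ⟨M, HasFrechetDerivAt.of_comp T hT hL⟩

end FrechetDerivative

section Topology

variable {α : Type*} [TopologicalSpace α]

theorem isGδ_preimage_val_iff {Ω s : Set α} (hΩ : IsOpen Ω) (hs : s ⊆ Ω) :
    IsGδ (Subtype.val ⁻¹' s : Set Ω) ↔ IsGδ s := by
  refine ⟨fun h => ?_, fun h => h.preimage continuous_subtype_val⟩
  obtain ⟨O, hO, hsO⟩ := isGδ_iff_eq_iInter_nat.1 h
  have hval : Subtype.val '' (Subtype.val ⁻¹' s : Set Ω) = s := by
    rw [Subtype.image_preimage_coe, inter_eq_right.2 hs]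
  rw [← hval, hsO, Subtype.val_injective.injOn.image_iInter_eq]
  exact .iInter_of_isOpen fun k => hΩ.isOpenMap_subtype_val _ (hO k)

theorem dense_preimage_val_iff {Ω s : Set α} (hs : s ⊆ Ω) :
    Dense (Subtype.val ⁻¹' s : Set Ω) ↔ Ω ⊆ closure s := by
  rw [Subtype.dense_iff, Subtype.image_preimage_coe, inter_eq_right.2 hs]

theorem subset_closure_iInter_of_isOpen [BaireSpace α] {Ω : Set α} (hΩ : IsOpen Ω)
    {W : ℕ → Set α} (hW : ∀ k, IsOpen (W k)) (hΩW : ∀ k, Ω ⊆ closure (W k)) :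
    Ω ⊆ closure (⋂ k, W k) := by
  have := hΩ.baireSpace
  have hdense : Dense (⋂ k, Subtype.val ⁻¹' W k : Set Ω) := by
    refine dense_iInter_of_isOpen (fun k => (hW k).preimage continuous_subtype_val)
      fun k => Subtype.dense_iff.2 ?_
    rw [Subtype.image_preimage_coe]
    exact fun x hx => hΩ.inter_closure ⟨hx, hΩW k hx⟩
  refine (Subtype.dense_iff.1 hdense).trans (closure_mono ?_)
  rw [← preimage_iInter, Subtype.image_preimage_coe]
  exact inter_subset_right

theorem IsOpenMap.image_subset_closure_iInter {β : Type*} [TopologicalSpace β] [BaireSpace α]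
    {T : α → β} (hTo : IsOpenMap T) (hTc : Continuous T) {Ω : Set α} (hΩ : IsOpen Ω)
    {V : ℕ → Set β} (hV : ∀ k, IsOpen (V k)) (hΩV : ∀ k, T '' Ω ⊆ closure (V k)) :
    T '' Ω ⊆ closure (⋂ k, V k) := by
  have hΩ' : Ω ⊆ closure (T ⁻¹' ⋂ k, V k) := by
    rw [preimage_iInter]
    exact subset_closure_iInter_of_isOpen hΩ (fun k => (hV k).preimage hTc) fun k =>
      (image_subset_iff.1 (hΩV k)).trans hTo.preimage_closure_subset_closure_preimage
  calc T '' Ω ⊆ T '' closure (T ⁻¹' ⋂ k, V k) := image_mono hΩ'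
    _ ⊆ closure (T '' (T ⁻¹' ⋂ k, V k)) := image_closure_subset_closure_image hTc
    _ ⊆ closure (⋂ k, V k) := closure_mono (image_preimage_subset _ _)

theorem exists_pairwiseDisjoint_subset_closure_biUnion {ι : Type*} (W : ι → Set α) (S : Set ι)
    (s : Set α) (h : ∀ o : Set α, IsOpen o → (o ∩ s).Nonempty → ∃ i ∈ S, (W i).Nonempty ∧ W i ⊆ o) :
    ∃ A ⊆ S, A.PairwiseDisjoint W ∧ s ⊆ closure (⋃ i ∈ A, W i) := by
  obtain ⟨A, ⟨hAS, hA⟩, hmax⟩ := zorn_subset {A | A ⊆ S ∧ A.PairwiseDisjoint W}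
    fun c hc hchain => ⟨⋃₀ c, ⟨sUnion_subset fun A hA => (hc hA).1,
      (pairwiseDisjoint_sUnion hchain.directedOn).2 fun A hA => (hc hA).2⟩,
      fun _ => subset_sUnion_of_mem⟩
  refine ⟨A, hAS, hA, fun y hy => by_contra fun hy' => ?_⟩
  set K := ⋃ i ∈ A, W i
  obtain ⟨i, hiS, ⟨z, hz⟩, hio⟩ := h (closure K)ᶜ isClosed_closure.isOpen_compl ⟨y, hy', hy⟩
  have hdisj : ∀ j ∈ A, i ≠ j → Disjoint (W i) (W j) := fun j hj _ =>
    disjoint_left.2 fun _ hx hx' => hio hx (subset_closure (mem_biUnion hj hx'))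
  have hiA : i ∈ A := hmax ⟨insert_subset hiS hAS, hA.insert hdisj⟩ (subset_insert i A)
    (mem_insert i A)
  exact hio hz (subset_closure (mem_biUnion hiA hz))

end Topology

section Cells

variable {X Y : Type*} [MetricSpace X] [TopologicalSpace Y] {T : X → Y}

theorem IsClosed.exists_mem_forall_mem_closure_of_antitone [CompleteSpace X] {B : ℕ → Set X}
    (hB : Antitone B) {ρ : ℕ → ℝ} (hρ : Tendsto ρ atTop (𝓝 0))
    (hdist : ∀ k, ∀ a ∈ B k, ∀ b ∈ B k, dist a b ≤ ρ k) {F : Set X} (hF : IsClosed F)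
    (hBF : ∀ k, (B k ∩ F).Nonempty) : ∃ x ∈ F, ∀ k, x ∈ closure (B k) := by
  choose z hzB hzF using hBF
  obtain ⟨x, hx⟩ := cauchySeq_tendsto_of_complete <| cauchySeq_of_le_tendsto_0 ρ
    (fun n m N hn hm => hdist N _ (hB hn (hzB n)) _ (hB hm (hzB m))) hρ
  exact ⟨x, hF.mem_of_tendsto hx (.of_forall hzF), fun k =>
    mem_closure_of_tendsto hx (eventually_atTop.2 ⟨k, fun j hj => hB hj (hzB j)⟩)⟩

structure IsCell (T : X → Y) (U : Set X) (ρ : ℝ) (W : Set Y) (B : Set X) : Prop where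
  isOpen_window : IsOpen W
  isOpen_base : IsOpen B
  window_subset : W ⊆ T '' B
  closure_subset : closure B ⊆ U
  dist_le : ∀ a ∈ B, ∀ b ∈ B, dist a b ≤ ρ

theorem exists_isCell_subset (hTc : Continuous T) (hTo : IsOpenMap T) {U : Set X}
    (hU : IsOpen U) {ρ : ℝ} (hρ : 0 < ρ) {P : Set Y} {Q : Set X} (hP : IsOpen P)
    (hQ : IsOpen Q) (hPQ : P ⊆ T '' Q) (hQU : Q ⊆ closure U) {o : Set Y} (ho : IsOpen o)
    (hoP : (o ∩ P).Nonempty) :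
    ∃ W B, IsCell T U ρ W B ∧ W.Nonempty ∧ W ⊆ o ∩ P ∧ B ⊆ Q := by
  obtain ⟨_, hyo, hyP⟩ := hoP
  obtain ⟨x₀, hx₀Q, rfl⟩ := hPQ hyP
  set N := T ⁻¹' (o ∩ P) ∩ Q
  have hN : IsOpen N := ((ho.inter hP).preimage hTc).inter hQ
  obtain ⟨x, hxN, hxU⟩ := mem_closure_iff.1 (hQU hx₀Q) N hN ⟨⟨hyo, hyP⟩, hx₀Q⟩
  obtain ⟨ε, hε, hεN⟩ := nhds_basis_closedBall.mem_iff.1 ((hN.inter hU).mem_nhds ⟨hxN, hxU⟩)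
  set r := min ε (ρ / 2)
  have hr : 0 < r := lt_min hε (half_pos hρ)
  have hrN : closedBall x r ⊆ N ∩ U :=
    (closedBall_subset_closedBall (min_le_left _ _)).trans hεN
  refine ⟨o ∩ P ∩ T '' ball x r, ball x r, ⟨(ho.inter hP).inter (hTo _ isOpen_ball),
    isOpen_ball, inter_subset_right, closure_ball_subset_closedBall.trans
    (hrN.trans inter_subset_right), fun a ha b hb => ?_⟩, ⟨T x, hxN.1, x, mem_ball_self hr, rfl⟩,
    inter_subset_left, ball_subset_closedBall.trans (hrN.trans
    (inter_subset_left.trans inter_subset_right))⟩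
  calc dist a b ≤ dist a x + dist b x := dist_triangle_right a b x
    _ ≤ ρ := by linarith [mem_ball.1 ha, mem_ball.1 hb, min_le_right ε (ρ / 2)]

theorem exists_isCell_refinement (hTc : Continuous T) (hTo : IsOpenMap T) {U : Set X}
    (hU : IsOpen U) {ρ : ℝ} (hρ : 0 < ρ) (R : Set (Set Y × Set X))
    (hR : ∀ p ∈ R, IsOpen p.1 ∧ IsOpen p.2 ∧ p.1 ⊆ T '' p.2 ∧ p.2 ⊆ closure U) :
    ∃ A : Set (Set Y × Set X),
      (∀ c ∈ A, IsCell T U ρ c.1 c.2 ∧ ∃ p ∈ R, c.1 ⊆ p.1 ∧ c.2 ⊆ p.2) ∧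
      A.PairwiseDisjoint Prod.fst ∧ (⋃ p ∈ R, p.1) ⊆ closure (⋃ c ∈ A, c.1) := by
  refine exists_pairwiseDisjoint_subset_closure_biUnion Prod.fst _ _ fun o ho ⟨y, hyo, hy⟩ => ?_
  obtain ⟨p, hp, hyp⟩ := mem_iUnion₂.1 hy
  obtain ⟨hP, hQ, hPQ, hQU⟩ := hR p hp
  obtain ⟨W, B, hcell, hW, hWo, hBQ⟩ :=
    exists_isCell_subset hTc hTo hU hρ hP hQ hPQ hQU ho ⟨y, hyo, hyp⟩
  exact ⟨(W, B), ⟨hcell, p, hp, hWo.trans inter_subset_right, hBQ⟩, hW,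
    hWo.trans inter_subset_left⟩

structure IsCellTower (T : X → Y) (U : ℕ → Set X) (ρ : ℕ → ℝ) (s : Set Y)
    (A : ℕ → Set (Set Y × Set X)) : Prop where
  isCell : ∀ k, ∀ c ∈ A k, IsCell T (U k) (ρ k) c.1 c.2
  pairwiseDisjoint : ∀ k, (A k).PairwiseDisjoint Prod.fst
  subset_closure : ∀ k, s ⊆ closure (⋃ c ∈ A k, c.1)
  refines : ∀ k, ∀ c ∈ A (k + 1), ∃ p ∈ A k, c.1 ⊆ p.1 ∧ c.2 ⊆ p.2

theorem exists_isCellTower (hTc : Continuous T) (hTo : IsOpenMap T) {Ω : Set X}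
    (hΩ : IsOpen Ω) {U : ℕ → Set X} (hU : ∀ k, IsOpen (U k)) (hUΩ : ∀ k, U k ⊆ Ω)
    (hΩU : ∀ k, Ω ⊆ closure (U k)) {ρ : ℕ → ℝ} (hρ : ∀ k, 0 < ρ k) :
    ∃ A, IsCellTower T U ρ (T '' Ω) A := by
  have step : ∀ k (A : Set (Set Y × Set X)), (∀ c ∈ A, IsCell T (U k) (ρ k) c.1 c.2) →
      T '' Ω ⊆ closure (⋃ c ∈ A, c.1) → ∃ A' : Set (Set Y × Set X),
        (∀ c ∈ A', IsCell T (U (k + 1)) (ρ (k + 1)) c.1 c.2 ∧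
          ∃ p ∈ A, c.1 ⊆ p.1 ∧ c.2 ⊆ p.2) ∧
        A'.PairwiseDisjoint Prod.fst ∧ T '' Ω ⊆ closure (⋃ c ∈ A', c.1) := by
    intro k A hA hΩA
    obtain ⟨A', hA', hdisj, hAA'⟩ := exists_isCell_refinement hTc hTo (hU (k + 1)) (hρ (k + 1))
      A fun c hc => ⟨(hA c hc).isOpen_window, (hA c hc).isOpen_base, (hA c hc).window_subset,
        subset_closure.trans ((hA c hc).closure_subset.trans ((hUΩ k).trans (hΩU (k + 1))))⟩
    exact ⟨A', hA', hdisj, hΩA.trans (closure_minimal hAA' isClosed_closure)⟩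
  obtain ⟨A₀, hA₀, hdisj₀, hΩA₀⟩ := exists_isCell_refinement hTc hTo (hU 0) (hρ 0)
    {(T '' Ω, Ω)} (by simpa using ⟨hTo Ω hΩ, hΩ, hΩU 0⟩)
  rw [biUnion_singleton] at hΩA₀
  choose! next hnext hdisj hΩnext using step
  let A : ℕ → Set (Set Y × Set X) := fun k => Nat.rec A₀ next k
  have hA : ∀ k, (∀ c ∈ A k, IsCell T (U k) (ρ k) c.1 c.2) ∧
      T '' Ω ⊆ closure (⋃ c ∈ A k, c.1) := by
    intro k
    induction k with
    | zero => exact ⟨fun c hc => (hA₀ c hc).1, hΩA₀⟩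
    | succ k ih => exact ⟨fun c hc => (hnext k _ ih.1 ih.2 c hc).1, hΩnext k _ ih.1 ih.2⟩
  refine ⟨A, ⟨fun k => (hA k).1, ?_, fun k => (hA k).2,
    fun k c hc => (hnext k _ (hA k).1 (hA k).2 c hc).2⟩⟩
  rintro (_ | k)
  exacts [hdisj₀, hdisj k _ (hA k).1 (hA k).2]

theorem IsCellTower.iInter_subset_image [CompleteSpace X] [T1Space Y] (hTc : Continuous T)
    {U : ℕ → Set X} {ρ : ℕ → ℝ} {s : Set Y} {A : ℕ → Set (Set Y × Set X)}
    (hA : IsCellTower T U ρ s A) (hρ : Tendsto ρ atTop (𝓝 0)) :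
    (⋂ k, ⋃ c ∈ A k, c.1) ⊆ T '' ⋂ k, U k := by
  intro y hy
  have hyA : ∀ k, ∃ c ∈ A k, y ∈ c.1 := fun k => by simpa using mem_iInter.1 hy k
  choose c hcA hyc using hyA
  have hcell := fun k => hA.isCell k _ (hcA k)
  have hnest : ∀ k, (c (k + 1)).2 ⊆ (c k).2 := fun k => by
    obtain ⟨p, hp, hcp₁, hcp₂⟩ := hA.refines k _ (hcA (k + 1))
    rwa [(hA.pairwiseDisjoint k).elim_set hp (hcA k) y (hcp₁ (hyc (k + 1))) (hyc k)] at hcp₂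
  obtain ⟨x, hxy, hx⟩ := (isClosed_singleton.preimage hTc).exists_mem_forall_mem_closure_of_antitone
    (antitone_nat_of_succ_le hnest) hρ (fun k => (hcell k).dist_le) fun k => by
      obtain ⟨x, hx, hxy⟩ := (hcell k).window_subset (hyc k)
      exact ⟨x, hx, hxy⟩
  exact ⟨x, mem_iInter.2 fun k => (hcell k).closure_subset (hx k), hxy⟩

theorem exists_isGδ_subset_image [CompleteSpace X] [T1Space Y] (hTc : Continuous T)
    (hTo : IsOpenMap T) {Ω G : Set X} (hΩ : IsOpen Ω) (hG : IsGδ G) (hGΩ : G ⊆ Ω)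
    (hΩG : Ω ⊆ closure G) : ∃ H : Set Y, IsGδ H ∧ H ⊆ T '' G ∧ T '' Ω ⊆ closure H := by
  obtain ⟨O, hO, rfl⟩ := isGδ_iff_eq_iInter_nat.1 hG
  have hGU : ∀ k, ⋂ n, O n ⊆ Ω ∩ O k := fun k => subset_inter hGΩ (iInter_subset O k)
  obtain ⟨A, hA⟩ := exists_isCellTower hTc hTo hΩ (fun k => hΩ.inter (hO k))
    (fun _ => inter_subset_left) (fun k => hΩG.trans (closure_mono (hGU k)))
    (ρ := fun k => 1 / ((k : ℝ) + 1)) fun _ => Nat.one_div_pos_of_nat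
  have hV : ∀ k, IsOpen (⋃ c ∈ A k, c.1) := fun k =>
    isOpen_biUnion fun c hc => (hA.isCell k c hc).isOpen_window
  refine ⟨_, .iInter_of_isOpen hV, ?_, hTo.image_subset_closure_iInter hTc hΩ hV hA.subset_closure⟩
  exact (hA.iInter_subset_image hTc tendsto_one_div_add_atTop_nhds_zero_nat).trans
    (image_mono (iInter_mono fun _ => inter_subset_right))

end Cells

theorem asplund_of_boundCovering_openSurjection_general (X Y : Type*) [AddCommGroup X] [Module ℝ X]
    [TopologicalSpace X] [ContinuousSMul ℝ X] (hX : CompletelyMetrizable X)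
    [AddCommGroup Y] [Module ℝ Y] [TopologicalSpace Y] [T3Space Y]
    (T : X →L[ℝ] Y) (hTopen : IsOpenMap T) (hTsurj : Function.Surjective T)
    (hTbc : ∀ B : Set Y, IsVonNBounded ℝ B → ∃ C : Set X, IsVonNBounded ℝ C ∧ B ⊆ T '' C)
    (hASP : IsAsplund X) :
    IsAsplund Y := by
  obtain ⟨m, rfl, hcomplete⟩ := hX
  intro D f hD hDo hDc hfc hfD
  have hΩ : IsOpen (T ⁻¹' D) := hDo.preimage T.continuous
  obtain ⟨G, hGΩ, hGδ, hGd, hGf⟩ := hASP (T ⁻¹' D) (f ∘ T) (hD.preimage hTsurj) hΩ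
    (hDc.linear_preimage T.toLinearMap) (hfc.comp T.continuous.continuousOn (mapsTo_preimage _ _))
    (hfD.comp_linearMap T.toLinearMap)
  obtain ⟨H, hH, hHG, hDH⟩ := exists_isGδ_subset_image T.continuous hTopen hΩ
    ((isGδ_preimage_val_iff hΩ hGΩ).1 hGδ) hGΩ ((dense_preimage_val_iff hGΩ).1 hGd)
  rw [image_preimage_eq D hTsurj] at hDH
  have hHD : H ⊆ D := hHG.trans ((image_mono hGΩ).trans (image_preimage_subset _ _))
  refine ⟨H, hHD, (isGδ_preimage_val_iff hDo hHD).2 hH, (dense_preimage_val_iff hHD).2 hDH, ?_⟩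
  intro y hy
  obtain ⟨x, hx, rfl⟩ := hHG hy
  exact (hGf x hx).of_comp T hTopen hTsurj hTbc

/-- If `X` is a Fréchet space (completely metrizable real locally convex space), `Y` a regular
(T₃) real topological vector space, and `T : X → Y` a continuous linear open surjection which
is bound covering (every bounded `B ⊆ Y` satisfies `B ⊆ T '' C` for some bounded `C ⊆ X`),
then `X` Asplund implies `Y` Asplund. -/
theorem asplund_of_boundCovering_openSurjection (X Y : Type*) [AddCommGroup X] [Module ℝ X]
    [TopologicalSpace X] [IsTopologicalAddGroup X] [ContinuousSMul ℝ X]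
    [LocallyConvexSpace ℝ X] [T2Space X] (hX : CompletelyMetrizable X)
    [AddCommGroup Y] [Module ℝ Y] [TopologicalSpace Y] [IsTopologicalAddGroup Y]
    [ContinuousSMul ℝ Y] [T3Space Y]
    (T : X →L[ℝ] Y) (hTopen : IsOpenMap T) (hTsurj : Function.Surjective T)
    (hTbc : ∀ B : Set Y, IsVonNBounded ℝ B → ∃ C : Set X, IsVonNBounded ℝ C ∧ B ⊆ T '' C)
    (hASP : IsAsplund X) :
    IsAsplund Y :=
  asplund_of_boundCovering_openSurjection_general X Y hX T hTopen hTsurj hTbc hASP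
end
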